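/- Let k be a field of characteristic p > 0, G a finite group, M a kG-module, R ⊴ G a p-subgroup acting trivially on M, and Q ≤ G. If the restriction of the Brauer quotient M(QR) to C_G(Q) is an indecomposable k[C_G(Q)]-module, then the restriction of M(Q) to C_G(Q) is indecomposable. -/

import Mathlib

/-!
Since `R` acts trivially, `M^(QR) = M^Q`, and the whole point is that the two trace sums
`Σ_{T < QR} tr_T^(QR) (M^T)` and `Σ_{T < Q} tr_T^Q (M^T)` coincide, so that `M(QR)` and `M(Q)`
are literally the same quotient of `M^Q`, with the same action of `C_G(Q)`.

A trace `tr_T^(QR)` with `R ≤ T` equals `tr_(T ∩ Q)^Q`, and a trace `tr_T^Q` with `Q ∩ R ≤ T`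
equals `tr_(TR)^(QR)`: in both cases the inclusion of `Q` into `QR` induces a bijection of the
coset spaces, because `QR = Q·R`. Every other trace vanishes: if `T < S ≤ TR`, then on
`S`-fixed vectors `tr_T = [S : T] · tr_S`, and `[S : T]` divides `[TR : T] = [R : R ∩ T]`, a
power of `p` different from `1`.
-/

variable {k V G : Type*} [Field k] [AddCommGroup V] [Module k V] [Group G]

/-- The subspace of `H`-fixed points `M^H` of a representation `M`. -/
def fixedSub (ρ : Representation k G V) (H : Subgroup G) : Submodule k V where
  carrier := {v | ∀ h ∈ H, ρ h v = v}
  add_mem' := by intro a b ha hb h hh; simp [map_add, ha h hh, hb h hh]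
  zero_mem' := by intro h hh; simp
  smul_mem' := by intro c v hv h hh; rw [LinearMap.map_smul, hv h hh]

/-- The relative trace map `tr_K^H : m ↦ Σ_{g ∈ [H/K]} g·m`, defined via a choice of
left coset representatives of `K` in `H` (on `K`-fixed points it is independent of
this choice). -/
noncomputable def relTrace [Finite G] (ρ : Representation k G V) (K H : Subgroup G) :
    V →ₗ[k] V :=
  letI : Fintype (H ⧸ K.subgroupOf H) := Fintype.ofFinite _
  ∑ x : H ⧸ K.subgroupOf H, ρ (x.out : G)

/-- The sum `Σ_{T < S} tr_T^S(M^T)` of the images of the relative traces from all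
proper subgroups of `S`. -/
noncomputable def traceSum [Finite G] (ρ : Representation k G V) (S : Subgroup G) :
    Submodule k V :=
  ⨆ T : {T : Subgroup G // T < S}, Submodule.map (relTrace ρ T.1 S) (fixedSub ρ T.1)

/-- The Brauer quotient (Brauer construction) `M(S) = M^S / Σ_{T<S} tr_T^S(M^T)`
as a `k`-vector space. -/
noncomputable abbrev BrauerQuotient [Finite G] (ρ : Representation k G V) (S : Subgroup G) :=
  (fixedSub ρ S) ⧸ ((traceSum ρ S).comap (fixedSub ρ S).subtype)

/-- A `k`-subspace `U` of the Brauer quotient `M(S)` is invariant under a subgroup `C`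
(of the normalizer of `S`) if the action induced by `ρ g`, `g ∈ C`, on `M(S)` maps `U`
into itself. -/
def BrauerInvariant [Finite G] (ρ : Representation k G V) (S C : Subgroup G)
    (U : Submodule k (BrauerQuotient ρ S)) : Prop :=
  ∀ g ∈ C, ∀ v gv : fixedSub ρ S, (gv : V) = ρ g (v : V) →
    Submodule.Quotient.mk v ∈ U → Submodule.Quotient.mk gv ∈ U

/-- The Brauer quotient `M(S)`, viewed as a module over `k[C]` for a subgroup `C` (of the
normalizer of `S`), is indecomposable: it is nonzero, and admits no direct sum
decomposition into two nonzero `C`-invariant subspaces. -/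
def BrauerIndecomposableOver [Finite G] (ρ : Representation k G V) (S C : Subgroup G) :
    Prop :=
  Nontrivial (BrauerQuotient ρ S) ∧
    ¬ ∃ U W : Submodule k (BrauerQuotient ρ S), BrauerInvariant ρ S C U ∧
      BrauerInvariant ρ S C W ∧ U ⊓ W = ⊥ ∧ U ⊔ W = ⊤ ∧ U ≠ ⊥ ∧ W ≠ ⊥

open scoped Pointwise

lemma surjective_quotientSubgroupOfEmbeddingOfLE {K H H' : Subgroup G} (hH : H ≤ H')
    (hmul : (H' : Set G) ⊆ H * K) :
    Function.Surjective (Subgroup.quotientSubgroupOfEmbeddingOfLE K hH) := by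
  intro y
  induction y using QuotientGroup.induction_on with | H x => ?_
  obtain ⟨h, hh, k, hk, hhk⟩ := hmul x.2
  refine ⟨QuotientGroup.mk ⟨h, hh⟩, ?_⟩
  rw [Subgroup.quotientSubgroupOfEmbeddingOfLE_apply_mk, QuotientGroup.eq,
    Subgroup.mem_subgroupOf]
  simpa [← hhk] using hk

lemma relIndex_eq_of_subset_mul {K H H' : Subgroup G} (hH : H ≤ H')
    (hmul : (H' : Set G) ⊆ H * K) : K.relIndex H = K.relIndex H' :=
  Nat.card_eq_of_bijective _
    ⟨(Subgroup.quotientSubgroupOfEmbeddingOfLE K hH).injective,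
      surjective_quotientSubgroupOfEmbeddingOfLE hH hmul⟩

lemma prime_dvd_relIndex_of_lt_of_le_sup [Finite G] {p : ℕ} (hp : p.Prime) {T S R : Subgroup G}
    [R.Normal] (hR : IsPGroup p R) (hTS : T < S) (hSR : S ≤ T ⊔ R) : p ∣ T.relIndex S := by
  have hdvd : T.relIndex S ∣ T.relIndex R := by
    rw [relIndex_eq_of_subset_mul (le_sup_right : R ≤ T ⊔ R)
      (by rw [sup_comm, Subgroup.normal_mul])]
    exact ⟨S.relIndex (T ⊔ R), (Subgroup.relIndex_mul_relIndex T S _ hTS.le hSR).symm⟩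
  have : Fact p.Prime := ⟨hp⟩
  obtain ⟨n, hn⟩ := hR.exists_card_eq
  obtain ⟨i, -, hi⟩ :=
    (Nat.dvd_prime_pow hp).mp (hn ▸ hdvd.trans (T.relIndex_dvd_card (K := R)))
  have hi0 : i ≠ 0 := by
    rintro rfl
    exact hTS.not_ge (Subgroup.relIndex_eq_one.mp hi)
  exact hi ▸ dvd_pow_self p hi0

lemma sup_inf_le_of_inf_le {T Q R : Subgroup G} [R.Normal] (hTQ : T ≤ Q) (hQR : Q ⊓ R ≤ T) :
    (T ⊔ R) ⊓ Q ≤ T := by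
  intro x hx
  obtain ⟨hx, hxQ⟩ := Subgroup.mem_inf.mp hx
  rw [← SetLike.mem_coe, Subgroup.mul_normal] at hx
  obtain ⟨t, ht, r, hr, rfl⟩ := hx
  have hrQ : r ∈ Q := by simpa using mul_mem (inv_mem (hTQ ht)) hxQ
  exact mul_mem ht (hQR ⟨hrQ, hr⟩)

section Fixed

variable (ρ : Representation k G V)

def vecStabilizer (v : V) : Subgroup G where
  carrier := {g | ρ g v = v}
  one_mem' := by simp
  mul_mem' {a b} (ha : ρ a v = v) (hb : ρ b v = v) := by
    rw [Set.mem_ofPred_eq, map_mul, Module.End.mul_apply, hb, ha]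
  inv_mem' {a} (ha : ρ a v = v) := by
    show ρ a⁻¹ v = v
    nth_rw 1 [← ha]
    exact ρ.inv_self_apply a v

lemma mem_fixedSub_iff_le_vecStabilizer {H : Subgroup G} {v : V} :
    v ∈ fixedSub ρ H ↔ H ≤ vecStabilizer ρ v :=
  Iff.rfl

lemma fixedSub_sup (A B : Subgroup G) : fixedSub ρ (A ⊔ B) = fixedSub ρ A ⊓ fixedSub ρ B := by
  ext v
  simp only [Submodule.mem_inf, mem_fixedSub_iff_le_vecStabilizer, sup_le_iff]

lemma fixedSub_antitone {H H' : Subgroup G} (h : H ≤ H') : fixedSub ρ H' ≤ fixedSub ρ H :=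
  fun _ hv g hg => hv g (h hg)

lemma fixedSub_sup_of_acts_trivially {R : Subgroup G} (htriv : ∀ r ∈ R, ∀ v : V, ρ r v = v)
    (Q : Subgroup G) : fixedSub ρ (Q ⊔ R) = fixedSub ρ Q := by
  rw [fixedSub_sup, inf_eq_left]
  exact fun v _ r hr => htriv r hr v

end Fixed

section RelTrace

variable [Finite G] (ρ : Representation k G V)

lemma relTrace_apply (K H : Subgroup G) (m : V) :
    let : Fintype (H ⧸ K.subgroupOf H) := Fintype.ofFinite _
    relTrace ρ K H m = ∑ x : H ⧸ K.subgroupOf H, ρ (x.out : G) m := by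
  simp [relTrace, LinearMap.sum_apply]

omit [Finite G] in
lemma out_mk_apply_of_mem_fixedSub {K H : Subgroup G} {m : V} (hm : m ∈ fixedSub ρ K) (h : H) :
    ρ ((QuotientGroup.mk h : H ⧸ K.subgroupOf H).out : G) m = ρ h m := by
  obtain ⟨c, hc⟩ := QuotientGroup.mk_out_eq_mul (K.subgroupOf H) h
  rw [hc, Subgroup.coe_mul, map_mul, Module.End.mul_apply, hm _ (Subgroup.mem_subgroupOf.mp c.2)]

lemma relTrace_eq_of_subgroupOf_eq {K K' H : Subgroup G} (h : K.subgroupOf H = K'.subgroupOf H) :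
    relTrace ρ K H = relTrace ρ K' H := by
  unfold relTrace
  -- the `Finite` proofs inside the `Fintype` instances block a direct `rw [h]`
  generalize_proofs hK hK'
  revert hK hK'
  rw [h]
  exact fun _ _ => rfl

lemma relTrace_apply_eq_of_subset_mul {K H H' : Subgroup G} (hH : H ≤ H')
    (hmul : (H' : Set G) ⊆ H * K) {m : V} (hm : m ∈ fixedSub ρ K) :
    relTrace ρ K H m = relTrace ρ K H' m := by
  let : Fintype (H ⧸ K.subgroupOf H) := Fintype.ofFinite _
  let : Fintype (H' ⧸ K.subgroupOf H') := Fintype.ofFinite _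
  rw [relTrace_apply, relTrace_apply]
  refine Fintype.sum_bijective _ ⟨(Subgroup.quotientSubgroupOfEmbeddingOfLE K hH).injective,
    surjective_quotientSubgroupOfEmbeddingOfLE hH hmul⟩ _ _ fun x => ?_
  induction x using QuotientGroup.induction_on with | H h => ?_
  rw [Subgroup.quotientSubgroupOfEmbeddingOfLE_apply_mk, out_mk_apply_of_mem_fixedSub ρ hm,
    out_mk_apply_of_mem_fixedSub ρ hm]
  rfl

lemma relTrace_apply_eq_relIndex_smul {T S H : Subgroup G} (hTS : T ≤ S) (hSH : S ≤ H) {m : V}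
    (hm : m ∈ fixedSub ρ S) : relTrace ρ T H m = T.relIndex S • relTrace ρ S H m := by
  let : Fintype (H ⧸ T.subgroupOf H) := Fintype.ofFinite _
  let : Fintype (H ⧸ S.subgroupOf H) := Fintype.ofFinite _
  let : Fintype (S.subgroupOf H ⧸ (T.subgroupOf H).subgroupOf (S.subgroupOf H)) :=
    Fintype.ofFinite _
  let e := Subgroup.quotientEquivProdOfLE (Subgroup.subgroupOf_mono H hTS)
  have hsummand : ∀ x, ρ (x.out : G) m = ρ ((e x).1.out : G) m := by
    intro x
    induction x using QuotientGroup.induction_on with | H h => ?_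
    rw [out_mk_apply_of_mem_fixedSub ρ (fixedSub_antitone ρ hTS hm)]
    exact (out_mk_apply_of_mem_fixedSub ρ hm h).symm
  rw [relTrace_apply, relTrace_apply, ← e.symm.sum_comp, Fintype.sum_prod_type]
  simp only [hsummand, Equiv.apply_symm_apply, Finset.sum_const, Finset.card_univ,
    ← Finset.smul_sum, Fintype.card_eq_nat_card]
  rw [← Subgroup.relIndex_subgroupOf hSH]
  rfl

lemma relTrace_apply_eq_zero_of_lt_of_le_sup {p : ℕ} (hp : p.Prime) [CharP k p]
    {T S H R : Subgroup G} [R.Normal] (hR : IsPGroup p R) (hTS : T < S) (hSR : S ≤ T ⊔ R)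
    (hSH : S ≤ H) {m : V} (hm : m ∈ fixedSub ρ S) : relTrace ρ T H m = 0 := by
  rw [relTrace_apply_eq_relIndex_smul ρ hTS.le hSH hm, ← Nat.cast_smul_eq_nsmul k,
    (CharP.cast_eq_zero_iff k p _).mpr (prime_dvd_relIndex_of_lt_of_le_sup hp hR hTS hSR),
    zero_smul]

end RelTrace

section TraceSum

variable [Finite G] (ρ : Representation k G V)

lemma relTrace_mem_traceSum {T S : Subgroup G} (hTS : T < S) {m : V} (hm : m ∈ fixedSub ρ T) :
    relTrace ρ T S m ∈ traceSum ρ S :=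
  Submodule.mem_iSup_of_mem (⟨T, hTS⟩ : {T : Subgroup G // T < S})
    (Submodule.mem_map_of_mem hm)

lemma traceSum_le_iff {S : Subgroup G} {N : Submodule k V} :
    traceSum ρ S ≤ N ↔ ∀ T < S, ∀ m ∈ fixedSub ρ T, relTrace ρ T S m ∈ N := by
  rw [traceSum, iSup_le_iff]
  simp only [Subtype.forall, Submodule.map_le_iff_le_comap]
  rfl

variable {p : ℕ} (hp : p.Prime) [CharP k p] {R : Subgroup G} [R.Normal] (hR : IsPGroup p R)
  (htriv : ∀ r ∈ R, ∀ v : V, ρ r v = v) (Q : Subgroup G)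
include hp hR htriv

lemma traceSum_sup_le : traceSum ρ (Q ⊔ R) ≤ traceSum ρ Q := by
  rw [traceSum_le_iff]
  intro T hT m hm
  by_cases hRT : R ≤ T
  · have hTQ : T ⊓ Q < Q := inf_lt_right.mpr fun hQT => hT.not_ge (sup_le hQT hRT)
    have hmul : ((Q ⊔ R : Subgroup G) : Set G) ⊆ Q * T := by
      rw [Subgroup.mul_normal]
      exact Set.mul_subset_mul_left hRT
    rw [← relTrace_apply_eq_of_subset_mul ρ le_sup_left hmul hm,
      relTrace_eq_of_subgroupOf_eq ρ (Subgroup.inf_subgroupOf_right T Q).symm]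
    exact relTrace_mem_traceSum ρ hTQ (fixedSub_antitone ρ inf_le_left hm)
  · have hmTR : m ∈ fixedSub ρ (T ⊔ R) := fixedSub_sup_of_acts_trivially ρ htriv T ▸ hm
    rw [relTrace_apply_eq_zero_of_lt_of_le_sup ρ hp hR (left_lt_sup.mpr hRT) le_rfl
      (sup_le hT.le le_sup_right) hmTR]
    exact zero_mem _

lemma traceSum_le_traceSum_sup : traceSum ρ Q ≤ traceSum ρ (Q ⊔ R) := by
  rw [traceSum_le_iff]
  intro T hT m hm
  have hmTR : m ∈ fixedSub ρ (T ⊔ R) := fixedSub_sup_of_acts_trivially ρ htriv T ▸ hm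
  by_cases hQRT : Q ⊓ R ≤ T
  · have hTRQ : (T ⊔ R) ⊓ Q ≤ T := sup_inf_le_of_inf_le hT.le hQRT
    have hTR : T ⊔ R < Q ⊔ R := by
      refine lt_of_le_not_ge (sup_le_sup_right hT.le R) fun hQ => hT.not_ge ?_
      exact fun q hq => hTRQ ⟨hQ (Subgroup.mem_sup_left hq), hq⟩
    have hmul : ((Q ⊔ R : Subgroup G) : Set G) ⊆ Q * (T ⊔ R : Subgroup G) := by
      rw [Subgroup.mul_normal]
      exact Set.mul_subset_mul_left (le_sup_right : R ≤ T ⊔ R)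
    have hsub : T.subgroupOf Q = (T ⊔ R).subgroupOf Q :=
      Subgroup.subgroupOf_inj.mpr (le_antisymm (inf_le_inf_right Q le_sup_left)
        (le_inf hTRQ inf_le_right))
    rw [relTrace_eq_of_subgroupOf_eq ρ hsub,
      relTrace_apply_eq_of_subset_mul ρ le_sup_left hmul hmTR]
    exact relTrace_mem_traceSum ρ hTR hmTR
  · rw [relTrace_apply_eq_zero_of_lt_of_le_sup ρ hp hR (S := T ⊔ Q ⊓ R) (left_lt_sup.mpr hQRT)
      (sup_le_sup_left inf_le_right T) (sup_le hT.le inf_le_left)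
      (fixedSub_antitone ρ (sup_le_sup_left inf_le_right T) hmTR)]
    exact zero_mem _

lemma traceSum_sup_eq : traceSum ρ (Q ⊔ R) = traceSum ρ Q :=
  le_antisymm (traceSum_sup_le ρ hp hR htriv Q) (traceSum_le_traceSum_sup ρ hp hR htriv Q)

end TraceSum

lemma brauerIndecomposableOver_iff_of_eq [Finite G] {ρ : Representation k G V}
    {S S' C : Subgroup G}
    (hfix : fixedSub ρ S = fixedSub ρ S') (htr : traceSum ρ S = traceSum ρ S') :
    BrauerIndecomposableOver ρ S C ↔ BrauerIndecomposableOver ρ S' C := by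
  unfold BrauerIndecomposableOver BrauerInvariant BrauerQuotient
  rw [hfix, htr]

/-- Let `k` be a field of characteristic `p > 0`, `G` a finite group, `M` a `kG`-module,
`R ⊴ G` a normal `p`-subgroup acting trivially on `M`, and `Q ≤ G`. If the restriction
of `M(QR)` to `C_G(Q)` is indecomposable, then the restriction of `M(Q)` to `C_G(Q)` is
indecomposable. -/
theorem scott_brauer_indecomposable {p : ℕ} (hp : p.Prime) [CharP k p] [Finite G]
    (ρ : Representation k G V) (R : Subgroup G) (hRn : R.Normal) (hRp : IsPGroup p R)
    (htriv : ∀ r ∈ R, ∀ v : V, ρ r v = v) (Q : Subgroup G)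
    (h : BrauerIndecomposableOver ρ (Q ⊔ R) (Subgroup.centralizer (Q : Set G))) :
    BrauerIndecomposableOver ρ Q (Subgroup.centralizer (Q : Set G)) :=
  (brauerIndecomposableOver_iff_of_eq (fixedSub_sup_of_acts_trivially ρ htriv Q)
    (traceSum_sup_eq ρ hp hRp htriv Q)).mp h
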